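/- arXiv:2303.06789 — 4 statements merged into one kernel-verified Lean document; each statement's English description precedes it below -/
import Mathlib

section
/- Let G = (V, E) be a finite simple graph and let G' be a graph obtained from G by subdividing each edge in some set F ⊆ E an arbitrary finite number of times (i.e., replacing each edge of F by a path of positive length through new vertices of degree 2). Then the pathwidth of G' satisfies pw(G') ≤ pw(G) + 2. -/
/-- A tree decomposition of a simple graph `G` on vertex type `V`, with bags indexed by the
nodes of a finite tree `T` on `Fin n`: every vertex is in some bag, every edge has both
endpoints in some bag, and for each vertex the set of nodes whose bag contains it induces a
connected (hence subtree) subgraph of `T`. -/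
def IsTreeDecomp {V : Type} (G : SimpleGraph V) {n : ℕ}
    (T : SimpleGraph (Fin n)) (bag : Fin n → Finset V) : Prop :=
  T.IsTree ∧
  (∀ v : V, ∃ i, v ∈ bag i) ∧
  (∀ u v : V, G.Adj u v → ∃ i, u ∈ bag i ∧ v ∈ bag i) ∧
  (∀ v : V, (T.induce {i | v ∈ bag i}).Connected)

/-- The treewidth of `G`: the least `w` such that `G` admits a tree decomposition all of whose
bags have at most `w + 1` vertices (i.e. of width at most `w`). -/
noncomputable def treewidth {V : Type} (G : SimpleGraph V) : ℕ :=
  sInf {w : ℕ | ∃ (n : ℕ) (T : SimpleGraph (Fin n)) (bag : Fin n → Finset V),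
    IsTreeDecomp G T bag ∧ ∀ i, (bag i).card ≤ w + 1}

/-- The pathwidth of `G`: the least `w` such that `G` admits a tree decomposition along a path
all of whose bags have at most `w + 1` vertices (i.e. a path decomposition of width at most
`w`). -/
noncomputable def pathwidth {V : Type} (G : SimpleGraph V) : ℕ :=
  sInf {w : ℕ | ∃ (n : ℕ) (bag : Fin n → Finset V),
    IsTreeDecomp G (SimpleGraph.pathGraph n) bag ∧ ∀ i, (bag i).card ≤ w + 1}

/-- The graph obtained from `G` by subdividing the edge `{u, v}` once: the edge `{u, v}` is
deleted and a new vertex `none` is joined to `u` and `v`; everything else is unchanged. -/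
def subdivideEdge {V : Type} (G : SimpleGraph V) (u v : V) : SimpleGraph (Option V) :=
  SimpleGraph.fromRel (fun a b =>
    (∃ x y : V, a = some x ∧ b = some y ∧ G.Adj x y ∧ s(x, y) ≠ s(u, v)) ∨
    (a = none ∧ (b = some u ∨ b = some v)))

/-- `IsSubdivisionOf G G'` means that `G'` is obtained from `G` by a finite sequence of single
edge subdivisions; equivalently, by replacing each edge of some set `F` of edges of `G` by a
path of positive length through new degree-2 vertices. -/
inductive IsSubdivisionOf : {V : Type} → SimpleGraph V → {W : Type} → SimpleGraph W → Prop
  | refl {V : Type} (G : SimpleGraph V) : IsSubdivisionOf G G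
  | step {V : Type} (G : SimpleGraph V) (u v : V) (huv : G.Adj u v)
      {W : Type} {G' : SimpleGraph W}
      (h : IsSubdivisionOf (subdivideEdge G u v) G') : IsSubdivisionOf G G'

/-! Record a path decomposition of width `w` by giving every vertex an interval of slots, and
let a slot be *owned* by an edge `(a, b)`: it may then hold `w + 3` vertices, provided at most
`w + 1` remain once `a` is discounted if its interval ends there and `b` if its interval starts
there. An owned edge `uv` at slot `t` is subdivided by a new vertex `x` by splitting `t` into two
slots, the first without `v` (if `v` arrives at `t`) but with `x`, the second without `u` (if `u`
leaves at `t`) but with `x`; they are owned by `ux` and `xv`, so the invariant survives. An edge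
owning no slot lies in an unowned slot of at most `w + 1` vertices, and a copy of that slot can
be inserted and given to the edge. So every slot keeps at most `w + 3` vertices. -/

open SimpleGraph

namespace SimpleGraph

theorem pathGraph_walk_mem_edges {n : ℕ} {i j : Fin n} (hij : (j : ℕ) = i + 1) :
    ∀ {a b : Fin n} (p : (pathGraph n).Walk a b), a ≤ i → i < b → s(i, j) ∈ p.edges
  | _, _, .nil, hai, hib => absurd (hai.trans_lt hib) (lt_irrefl _)
  | a, _, .cons (v := c) hac p, hai, hib => by
    rw [Walk.edges_cons, List.mem_cons]
    by_cases h : a = i ∧ c = j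
    · exact .inl (by rw [h.1, h.2])
    · rw [pathGraph_adj] at hac
      exact .inr (pathGraph_walk_mem_edges hij p (by rw [Fin.le_def] at hai ⊢; omega) hib)

theorem pathGraph_walk_mem_support {n : ℕ} {a b i : Fin n} (p : (pathGraph n).Walk a b)
    (hai : a ≤ i) (hib : i ≤ b) : i ∈ p.support := by
  rcases hib.lt_or_eq with hib | rfl
  · exact p.fst_mem_support_of_mem_edges
      (pathGraph_walk_mem_edges (j := ⟨i + 1, by omega⟩) rfl p hai hib)
  · exact p.end_mem_support

theorem pathGraph_isTree {n : ℕ} (hn : 0 < n) : (pathGraph n).IsTree := by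
  obtain ⟨m, rfl⟩ := Nat.exists_eq_add_of_lt hn
  refine ⟨pathGraph_connected _, isAcyclic_iff_forall_adj_isBridge.2 fun a b hab => ?_⟩
  rw [isBridge_iff_forall_walk_mem_edges]
  intro p
  rcases pathGraph_adj.1 hab with h | h
  · exact pathGraph_walk_mem_edges h.symm p le_rfl (Fin.lt_def.2 (by omega))
  · simpa [Sym2.eq_swap] using
      pathGraph_walk_mem_edges h.symm p.reverse le_rfl (Fin.lt_def.2 (by omega))

theorem ordConnected_of_preconnected_induce_pathGraph {n : ℕ} {S : Set (Fin n)}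
    (hS : ((pathGraph n).induce S).Preconnected) : S.OrdConnected := by
  refine ⟨fun a ha b hb i hi => ?_⟩
  obtain ⟨p⟩ := hS ⟨a, ha⟩ ⟨b, hb⟩
  have := pathGraph_walk_mem_support (p.map (Embedding.induce S).toHom) hi.1 hi.2
  rw [Walk.support_map, List.mem_map] at this
  obtain ⟨⟨j, hj⟩, -, rfl⟩ := this
  exact hj

theorem connected_induce_pathGraph {n : ℕ} {S : Set (Fin n)} (hS : S.OrdConnected)
    (hne : S.Nonempty) : ((pathGraph n).induce S).Connected := by
  have reach : ∀ (d : ℕ) (a b : S), (b : ℕ) = a + d → ((pathGraph n).induce S).Reachable a b := by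
    intro d
    induction d with
    | zero => exact fun a b h => by rw [Subtype.ext (Fin.ext h)]
    | succ d ih =>
      intro a b h
      let c : Fin n := ⟨a + 1, by have := b.1.2; omega⟩
      have hc : c ∈ S :=
        hS.out a.2 b.2 ⟨Fin.le_def.2 (by simp [c]), Fin.le_def.2 (by simp only [c]; omega)⟩
      have hac : ((pathGraph n).induce S).Adj a ⟨c, hc⟩ := by simp [pathGraph_adj, c]
      exact hac.reachable.trans (ih ⟨c, hc⟩ b (by simp [c]; omega))
  have := hne.to_subtype
  refine Connected.mk fun a b => ?_
  rcases le_total (a : Fin n) b with h | h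
  · exact reach ((b : ℕ) - a) a b (by rw [Fin.le_def] at h; omega)
  · exact (reach ((a : ℕ) - b) b a (by rw [Fin.le_def] at h; omega)).symm

end SimpleGraph

theorem IsTreeDecomp.exists_interval {V : Type} {G : SimpleGraph V} {n : ℕ}
    {bag : Fin n → Finset V} (hd : IsTreeDecomp G (pathGraph n) bag) (x : V) :
    ∃ lo hi : Fin n, ∀ i, x ∈ bag i ↔ lo ≤ i ∧ i ≤ hi := by
  classical
  set s := Finset.univ.filter (x ∈ bag ·)
  have hne : s.Nonempty := by simpa [s, Finset.filter_nonempty_iff] using hd.2.1 x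
  have hS := ordConnected_of_preconnected_induce_pathGraph (hd.2.2.2 x).preconnected
  refine ⟨s.min' hne, s.max' hne, fun i => ⟨fun hi => ⟨s.min'_le i ?_, s.le_max' i ?_⟩,
    fun hi => hS.out ?_ ?_ hi⟩⟩
  · simpa [s] using hi
  · simpa [s] using hi
  · simpa [s] using s.min'_mem hne
  · simpa [s] using s.max'_mem hne

section subdivideEdge

variable {V : Type} {G : SimpleGraph V} {u v : V}

@[simp]
theorem subdivideEdge_adj_some_some {x y : V} :
    (subdivideEdge G u v).Adj (some x) (some y) ↔ G.Adj x y ∧ s(x, y) ≠ s(u, v) := by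
  simp only [subdivideEdge, SimpleGraph.fromRel_adj, ne_eq, Option.some.injEq, reduceCtorEq,
    false_and, or_false, exists_and_left, exists_eq_left']
  constructor
  · rintro ⟨-, h | h⟩
    · exact h
    · exact ⟨h.1.symm, by rw [Sym2.eq_swap]; exact h.2⟩
  · exact fun h => ⟨h.1.ne, .inl h⟩

@[simp]
theorem subdivideEdge_adj_none_some {y : V} :
    (subdivideEdge G u v).Adj none (some y) ↔ y = u ∨ y = v := by
  simp [subdivideEdge]

theorem subdivideEdge_comm : subdivideEdge G u v = subdivideEdge G v u := by
  ext (_ | x) (_ | y)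
  · simp
  · simp [or_comm]
  · simp [(subdivideEdge G u v).adj_comm, (subdivideEdge G v u).adj_comm, or_comm]
  · simp [Sym2.eq_swap]

end subdivideEdge

/-- Vertex `x` occupies the slots `left x, …, right x`; slot `t` is owned by `owner t`. -/
structure IntervalLayout (V : Type) where
  left : V → ℕ
  right : V → ℕ
  owner : ℕ → Option (V × V)

namespace IntervalLayout

variable {V : Type} (M : IntervalLayout V)

def live (t : ℕ) : Set V := {x | M.left x ≤ t ∧ t ≤ M.right x}

def core (t : ℕ) : Set V :=
  {x ∈ M.live t | (∀ b, M.owner t = some (x, b) → M.right x ≠ t) ∧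
    ∀ a, M.owner t = some (a, x) → M.left x ≠ t}

structure Valid (G : SimpleGraph V) (w : ℕ) : Prop where
  left_le_right : ∀ x, M.left x ≤ M.right x
  encard_core_le : ∀ t, (M.core t).encard ≤ w + 1
  exists_slot : ∀ a b, G.Adj a b → ∃ t, a ∈ M.live t ∧ b ∈ M.live t ∧
    (M.owner t = none ∨ M.owner t = some (a, b) ∨ M.owner t = some (b, a))

variable {M}

@[simp]
theorem mem_live {x : V} {t : ℕ} : x ∈ M.live t ↔ M.left x ≤ t ∧ t ≤ M.right x := Iff.rfl

theorem core_eq_live {t : ℕ} (h : M.owner t = none) : M.core t = M.live t := by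
  ext x
  simp [core, h]

theorem live_subset_insert_insert_core {t : ℕ} {a b : V} (h : M.owner t = some (a, b)) :
    M.live t ⊆ insert a (insert b (M.core t)) := by
  intro x hx
  by_cases hxa : x = a
  · exact .inl hxa
  by_cases hxb : x = b
  · exact .inr (.inl hxb)
  refine .inr (.inr ⟨hx, fun b' h' => ?_, fun a' h' => ?_⟩) <;> simp_all

theorem Valid.encard_live_le {G : SimpleGraph V} {w : ℕ} (hM : M.Valid G w) (t : ℕ) :
    (M.live t).encard ≤ w + 3 := by
  cases h : M.owner t with
  | none => exact (core_eq_live h ▸ hM.encard_core_le t).trans (by gcongr; norm_num)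
  | some p =>
    calc (M.live t).encard ≤ (insert p.1 (insert p.2 (M.core t))).encard :=
          Set.encard_le_encard (live_subset_insert_insert_core h)
      _ ≤ (M.core t).encard + 1 + 1 :=
          (Set.encard_insert_le _ _).trans (by grw [Set.encard_insert_le])
      _ ≤ w + 3 := by grw [hM.encard_core_le t]; norm_num [add_assoc]

theorem Valid.pathwidth_le [Fintype V] {G : SimpleGraph V} {w : ℕ} (hM : M.Valid G w) :
    pathwidth G ≤ w + 2 := by
  classical
  set N := Finset.univ.sup M.right + 1
  have hN : ∀ x, M.right x < N := fun x => Nat.lt_succ_of_le (Finset.le_sup (Finset.mem_univ x))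
  refine Nat.sInf_le ⟨N, fun i => (M.live i).toFinset, ⟨pathGraph_isTree (by omega), ?_, ?_, ?_⟩,
    fun i => ?_⟩
  · exact fun x => ⟨⟨M.left x, (hM.left_le_right x).trans_lt (hN x)⟩,
      by simpa using hM.left_le_right x⟩
  · intro a b hab
    obtain ⟨t, ha, hb, -⟩ := hM.exists_slot a b hab
    exact ⟨⟨t, ha.2.trans_lt (hN a)⟩, by simpa using ha, by simpa using hb⟩
  · refine fun x => connected_induce_pathGraph ⟨fun i hi j hj k hk => ?_⟩
      ⟨⟨M.left x, (hM.left_le_right x).trans_lt (hN x)⟩, by simpa using hM.left_le_right x⟩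
    simp only [Set.mem_ofPred_eq, Set.mem_toFinset, mem_live, Set.mem_Icc, Fin.le_def] at hi hj hk ⊢
    omega
  · have := hM.encard_live_le i
    rw [← Set.coe_toFinset (M.live i), Set.encard_coe_eq_coe_finsetCard] at this
    exact_mod_cast this

theorem exists_valid_of_isTreeDecomp {G : SimpleGraph V} {n : ℕ} {bag : Fin n → Finset V} {w : ℕ}
    (hd : IsTreeDecomp G (pathGraph n) bag) (hw : ∀ i, (bag i).card ≤ w + 1) :
    ∃ M : IntervalLayout V, M.Valid G w := by
  choose lo hi hbag using hd.exists_interval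
  let M : IntervalLayout V := ⟨fun x => lo x, fun x => hi x, fun _ => none⟩
  refine ⟨M, fun x => ?_, fun t => ?_, ?_⟩
  · obtain ⟨i, hi⟩ := hd.2.1 x
    exact ((hbag x i).1 hi).1.trans ((hbag x i).1 hi).2
  · rw [core_eq_live rfl]
    by_cases ht : t < n
    · calc _ ≤ ((bag ⟨t, ht⟩ : Finset V) : Set V).encard :=
            Set.encard_le_encard fun x hx => (hbag x _).2 ⟨Fin.le_def.2 hx.1, Fin.le_def.2 hx.2⟩
        _ ≤ w + 1 := by rw [Set.encard_coe_eq_coe_finsetCard]; exact_mod_cast hw _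
    · have : M.live t = ∅ :=
        Set.eq_empty_of_forall_notMem fun x hx => ht (hx.2.trans_lt (hi x).2)
      simp [this]
  · intro a b hab
    obtain ⟨i, ha, hb⟩ := hd.2.2.1 a b hab
    exact ⟨i, (hbag a i).1 ha, (hbag b i).1 hb, .inl rfl⟩

variable (M) in
/-- Slot `t₀` is duplicated, and its copy `t₀ + 1` is given to `p`. -/
def insertCopy (t₀ : ℕ) (p : V × V) : IntervalLayout V where
  left x := if M.left x ≤ t₀ then M.left x else M.left x + 1
  right x := if M.right x < t₀ then M.right x else M.right x + 1
  owner t := if t = t₀ + 1 then some p else M.owner (if t ≤ t₀ then t else t - 1)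

theorem mem_live_insertCopy {t₀ t : ℕ} {p : V × V} {x : V} :
    x ∈ (M.insertCopy t₀ p).live t ↔ x ∈ M.live (if t ≤ t₀ then t else t - 1) := by
  simp only [mem_live, insertCopy]
  split_ifs <;> omega

theorem core_insertCopy_subset {t₀ t : ℕ} {p : V × V} (h : M.owner t₀ = none) :
    (M.insertCopy t₀ p).core t ⊆ M.core (if t ≤ t₀ then t else t - 1) := by
  rintro x ⟨hx, hr, hl⟩
  rw [mem_live_insertCopy] at hx
  by_cases ht : t = t₀ ∨ t = t₀ + 1
  · have hs : (if t ≤ t₀ then t else t - 1) = t₀ := by split_ifs <;> omega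
    rwa [hs, core_eq_live h, ← hs]
  refine ⟨hx, fun b hb => ?_, fun a ha => ?_⟩
  · have := hr b
    simp only [insertCopy] at this
    grind
  · have := hl a
    simp only [insertCopy] at this
    grind

theorem Valid.insertCopy {G : SimpleGraph V} {w t₀ : ℕ} (hM : M.Valid G w)
    (h : M.owner t₀ = none) (p : V × V) : (M.insertCopy t₀ p).Valid G w where
  left_le_right x := by
    have := hM.left_le_right x
    simp only [IntervalLayout.insertCopy]
    split_ifs <;> omega
  encard_core_le t :=
    (Set.encard_le_encard (core_insertCopy_subset h)).trans (hM.encard_core_le _)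
  exists_slot a b hab := by
    obtain ⟨t, ha, hb, hown⟩ := hM.exists_slot a b hab
    set s := if t ≤ t₀ then t else t + 1
    have hsource : (if s ≤ t₀ then s else s - 1) = t := by simp only [s]; split_ifs <;> omega
    have hs : s ≠ t₀ + 1 := by simp only [s]; split_ifs <;> omega
    refine ⟨s, ?_, ?_, ?_⟩
    · rwa [mem_live_insertCopy, hsource]
    · rwa [mem_live_insertCopy, hsource]
    · simpa [IntervalLayout.insertCopy, hs, hsource] using hown

section subdivide

variable [DecidableEq V]

variable (M) in
/-- Subdivides the edge `(u, v)` owning slot `t₀` by a new vertex `none`: slot `t₀` is split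
into `t₀`, owned by `(u, none)`, and `t₀ + 1`, owned by `(none, v)`. -/
def subdivide (t₀ : ℕ) (u v : V) : IntervalLayout (Option V) where
  left
    | none => t₀
    | some x => if x = v ∧ M.left x = t₀ then t₀ + 1
        else if M.left x ≤ t₀ then M.left x else M.left x + 1
  right
    | none => t₀ + 1
    | some x => if x = u ∧ M.right x = t₀ then t₀
        else if M.right x < t₀ then M.right x else M.right x + 1
  owner t :=
    if t = t₀ then some (some u, none) else if t = t₀ + 1 then some (none, some v)
    else (M.owner (if t ≤ t₀ then t else t - 1)).map (Prod.map some some)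

variable {t₀ t : ℕ} {u v : V}

theorem none_mem_live_subdivide : none ∈ (M.subdivide t₀ u v).live t ↔ t = t₀ ∨ t = t₀ + 1 := by
  simp only [mem_live, subdivide]
  omega

theorem some_mem_live_subdivide {x : V} :
    some x ∈ (M.subdivide t₀ u v).live t ↔ x ∈ M.live (if t ≤ t₀ then t else t - 1) ∧
      ¬(t = t₀ ∧ x = v ∧ M.left x = t₀) ∧ ¬(t = t₀ + 1 ∧ x = u ∧ M.right x = t₀) := by
  simp only [mem_live, subdivide]
  split_ifs <;> grind

theorem core_subdivide_subset (h : M.owner t₀ = some (u, v)) :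
    (M.subdivide t₀ u v).core t ⊆ some '' M.core (if t ≤ t₀ then t else t - 1) := by
  rintro (_ | x) ⟨hx, hr, hl⟩
  · rw [none_mem_live_subdivide] at hx
    rcases hx with rfl | rfl
    · exact absurd rfl (hl (some u) (by simp [subdivide]))
    · exact absurd rfl (hr (some v) (by simp [subdivide]))
  rw [some_mem_live_subdivide] at hx
  refine ⟨x, ⟨hx.1, fun b hb => ?_, fun a ha => ?_⟩, rfl⟩
  · have h₁ := hr (some b)
    have h₂ := hr none
    simp only [subdivide] at h₁ h₂
    grind
  · have h₁ := hl (some a)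
    have h₂ := hl none
    simp only [subdivide] at h₁ h₂
    grind

theorem some_mem_live_subdivide_shift {x : V} (ht : t ≠ t₀) :
    some x ∈ (M.subdivide t₀ u v).live (if t ≤ t₀ then t else t + 1) ↔ x ∈ M.live t := by
  rw [some_mem_live_subdivide]
  split_ifs <;> grind

theorem owner_subdivide_shift (ht : t ≠ t₀) :
    (M.subdivide t₀ u v).owner (if t ≤ t₀ then t else t + 1) =
      (M.owner t).map (Prod.map some some) := by
  simp only [subdivide]
  split_ifs <;> grind

theorem exists_slot_none_subdivide (hu : u ∈ M.live t₀) (hv : v ∈ M.live t₀) (huv : u ≠ v)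
    {y : V} (hy : y = u ∨ y = v) :
    ∃ t, none ∈ (M.subdivide t₀ u v).live t ∧ some y ∈ (M.subdivide t₀ u v).live t ∧
      ((M.subdivide t₀ u v).owner t = some (none, some y) ∨
        (M.subdivide t₀ u v).owner t = some (some y, none)) := by
  rcases hy with rfl | rfl
  · refine ⟨t₀, none_mem_live_subdivide.2 (.inl rfl), ?_, .inr (by simp [subdivide])⟩
    rw [some_mem_live_subdivide]
    simp [hu, huv]
  · refine ⟨t₀ + 1, none_mem_live_subdivide.2 (.inr rfl), ?_, .inl (by simp [subdivide])⟩
    rw [some_mem_live_subdivide]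
    simp [hv, huv.symm]

theorem Valid.subdivide {G : SimpleGraph V} {w : ℕ} (hM : M.Valid G w)
    (h : M.owner t₀ = some (u, v)) (hu : u ∈ M.live t₀) (hv : v ∈ M.live t₀) (huv : u ≠ v) :
    (M.subdivide t₀ u v).Valid (subdivideEdge G u v) w where
  left_le_right
    | none => by simp [IntervalLayout.subdivide]
    | some x => by
      have := hM.left_le_right x
      simp only [IntervalLayout.subdivide]
      grind
  encard_core_le t := by
    grw [Set.encard_le_encard (core_subdivide_subset h), (Option.some_injective V).encard_image]
    exact hM.encard_core_le _
  exists_slot := by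
    rintro (_ | a) (_ | b) hab
    · exact absurd hab (SimpleGraph.irrefl _)
    · obtain ⟨t, h₁, h₂, h₃⟩ :=
        exists_slot_none_subdivide hu hv huv (subdivideEdge_adj_none_some.1 hab)
      exact ⟨t, h₁, h₂, .inr h₃⟩
    · obtain ⟨t, h₁, h₂, h₃⟩ :=
        exists_slot_none_subdivide hu hv huv (subdivideEdge_adj_none_some.1 hab.symm)
      exact ⟨t, h₂, h₁, .inr h₃.symm⟩
    rw [subdivideEdge_adj_some_some] at hab
    obtain ⟨t, ha, hb, hown⟩ := hM.exists_slot a b hab.1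
    have ht : t ≠ t₀ := by
      rintro rfl
      rw [h] at hown
      grind [Sym2.eq_swap]
    refine ⟨_, (some_mem_live_subdivide_shift ht).2 ha, (some_mem_live_subdivide_shift ht).2 hb, ?_⟩
    rw [owner_subdivide_shift ht]
    rcases hown with h' | h' | h' <;> simp [h']

end subdivide

theorem Valid.exists_owner {G : SimpleGraph V} {w : ℕ} (hM : M.Valid G w) {u v : V}
    (huv : G.Adj u v) : ∃ (M' : IntervalLayout V) (t : ℕ), M'.Valid G w ∧ u ∈ M'.live t ∧
      v ∈ M'.live t ∧ (M'.owner t = some (u, v) ∨ M'.owner t = some (v, u)) := by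
  obtain ⟨t, hu, hv, hown | hown⟩ := hM.exists_slot u v huv
  · refine ⟨M.insertCopy t (u, v), t + 1, hM.insertCopy hown _, ?_, ?_,
      .inl (by simp [IntervalLayout.insertCopy])⟩
    · rw [mem_live_insertCopy]; simpa using hu
    · rw [mem_live_insertCopy]; simpa using hv
  · exact ⟨M, t, hM, hu, hv, hown⟩

theorem Valid.exists_valid_subdivideEdge {G : SimpleGraph V} {w : ℕ} (hM : M.Valid G w) {u v : V}
    (huv : G.Adj u v) : ∃ M' : IntervalLayout (Option V), M'.Valid (subdivideEdge G u v) w := by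
  classical
  obtain ⟨M, t, hM, hu, hv, hown | hown⟩ := hM.exists_owner huv
  · exact ⟨_, hM.subdivide hown hu hv huv.ne⟩
  · exact subdivideEdge_comm (G := G) ▸ ⟨_, hM.subdivide hown hv hu huv.ne'⟩

end IntervalLayout

theorem IsSubdivisionOf.exists_valid {V W : Type} {G : SimpleGraph V} {G' : SimpleGraph W}
    (h : IsSubdivisionOf G G') {M : IntervalLayout V} {w : ℕ} (hM : M.Valid G w) :
    ∃ M' : IntervalLayout W, M'.Valid G' w := by
  induction h with
  | refl => exact ⟨M, hM⟩
  | step G u v huv _ ih =>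
    obtain ⟨M', hM'⟩ := hM.exists_valid_subdivideEdge huv
    exact ih hM'

theorem exists_isTreeDecomp_card_le_pathwidth {V : Type} [Fintype V] (G : SimpleGraph V) :
    ∃ (n : ℕ) (bag : Fin n → Finset V),
      IsTreeDecomp G (pathGraph n) bag ∧ ∀ i, (bag i).card ≤ pathwidth G + 1 := by
  refine Nat.sInf_mem (s := {w | ∃ (n : ℕ) (bag : Fin n → Finset V),
      IsTreeDecomp G (pathGraph n) bag ∧ ∀ i, (bag i).card ≤ w + 1})
    ⟨Fintype.card V, 1, fun _ => Finset.univ, ⟨pathGraph_isTree one_pos, ?_, ?_, ?_⟩,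
      fun _ => Nat.le_succ_of_le (Finset.card_le_univ _)⟩
  · exact fun x => ⟨0, Finset.mem_univ x⟩
  · exact fun a b _ => ⟨0, Finset.mem_univ a, Finset.mem_univ b⟩
  · exact fun x =>
      connected_induce_pathGraph ⟨fun _ _ _ _ _ _ => Finset.mem_univ x⟩ ⟨0, Finset.mem_univ x⟩

/-- If the finite simple graph `G'` is obtained from the finite simple graph `G` by subdividing
each edge in some set `F` of edges of `G` an arbitrary finite number of times, then
`pw(G') ≤ pw(G) + 2`. -/
theorem pathwidth_subdivision {V W : Type} [Fintype V] [Fintype W]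
    (G : SimpleGraph V) (G' : SimpleGraph W) (hsub : IsSubdivisionOf G G') :
    pathwidth G' ≤ pathwidth G + 2 := by
  obtain ⟨n, bag, hd, hcard⟩ := exists_isTreeDecomp_card_le_pathwidth G
  obtain ⟨M, hM⟩ := IntervalLayout.exists_valid_of_isTreeDecomp hd hcard
  obtain ⟨M', hM'⟩ := hsub.exists_valid hM
  exact hM'.pathwidth_le
end

section
/- For every h ≥ 1, the complete binary tree T_h of height h has pathwidth exactly ⌈h/2⌉. -/
/-- The complete binary tree of height `h`, as a simple graph: vertices are the binary strings
of length at most `h` (the root is the empty string, with `2 ^ (h + 1) - 1` vertices in total),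
and each vertex `l` of length less than `h` is adjacent to its two children `x :: l`. -/
def completeBinaryTree (h : ℕ) : SimpleGraph {l : List Bool // l.length ≤ h} :=
  SimpleGraph.fromRel (fun a b => ∃ x : Bool, (b : List Bool) = x :: (a : List Bool))

namespace SimpleGraph

section Hasse

variable {α : Type*} [LinearOrder α]

theorem mem_support_hasse_of_le_of_le {t : α} :
    ∀ {x y : α} (p : (hasse α).Walk x y), x ≤ t → t ≤ y → t ∈ p.support
  | _, _, .nil, hx, hy => by simp [le_antisymm hy hx]
  | _, _, .cons (v := z) hxz p, hx, hy => by
    rcases hx.eq_or_lt with rfl | hxt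
    · simp
    · have hzt : z ≤ t := (hasse_adj.mp hxz).elim (·.ge_of_gt hxt) fun h => (h.lt.trans hxt).le
      simp [mem_support_hasse_of_le_of_le p hzt hy]

theorem mem_edges_hasse_of_le_of_le {a b : α} (hab : a ⋖ b) :
    ∀ {x y : α} (p : (hasse α).Walk x y), x ≤ a → b ≤ y → s(a, b) ∈ p.edges
  | _, _, .nil, hx, hy => absurd (hy.trans hx) hab.lt.not_ge
  | _, _, .cons (v := z) hxz p, hx, hy => by
    rw [Walk.edges_cons, List.mem_cons]
    by_cases hza : z ≤ a
    · exact .inr (mem_edges_hasse_of_le_of_le hab p hza hy)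
    · rcases hasse_adj.mp hxz with h | h
      · obtain rfl : _ = a := hx.eq_or_lt.resolve_right fun hlt => h.2 hlt (not_le.mp hza)
        exact .inl (by rw [h.unique_right hab])
      · exact absurd (h.lt.trans_le hx).le hza

theorem isAcyclic_hasse : (hasse α).IsAcyclic :=
  isAcyclic_iff_forall_adj_isBridge.mpr fun a b hab => by
    rcases hasse_adj.mp hab with h | h
    · exact isBridge_iff_forall_walk_mem_edges.mpr fun p =>
        mem_edges_hasse_of_le_of_le h p le_rfl le_rfl
    · rw [Sym2.eq_swap]
      exact isBridge_iff_forall_walk_mem_edges.mpr fun p =>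
        mem_edges_hasse_of_le_of_le h p le_rfl le_rfl

end Hasse

theorem isTree_pathGraph {n : ℕ} (hn : n ≠ 0) : (pathGraph n).IsTree := by
  obtain ⟨m, rfl⟩ := Nat.exists_eq_succ_of_ne_zero hn
  exact ⟨pathGraph_connected m, isAcyclic_hasse⟩

theorem connected_induce_pathGraph_iff {n : ℕ} {s : Set (Fin n)} :
    ((pathGraph n).induce s).Connected ↔ s.Nonempty ∧ s.OrdConnected := by
  constructor
  · intro hc
    refine ⟨hc.nonempty.elim fun i => ⟨i, i.2⟩, ⟨fun i hi k hk j hj => ?_⟩⟩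
    obtain ⟨p⟩ := hc.preconnected ⟨i, hi⟩ ⟨k, hk⟩
    have : j ∈ (p.map (Embedding.induce s).toHom).support :=
      mem_support_hasse_of_le_of_le (p.map (Embedding.induce s).toHom) hj.1 hj.2
    rw [Walk.support_map, List.mem_map] at this
    obtain ⟨x, -, rfl⟩ := this
    exact x.2
  · rintro ⟨⟨i, hi⟩, hs⟩
    obtain ⟨m, rfl⟩ : ∃ m, n = m + 1 := Nat.exists_eq_succ_of_ne_zero (Fin.pos i).ne'
    have : Nonempty s := ⟨⟨i, hi⟩⟩
    suffices h : ∀ a b : s, a ≤ b → ((pathGraph (m + 1)).induce s).Reachable a b from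
      .mk fun a b => (le_total a b).elim (h a b) fun hba => (h b a hba).symm
    rintro ⟨a, ha⟩ ⟨b, hb⟩ (hab : a ≤ b)
    induction b using Fin.induction with
    | zero => obtain rfl := Fin.le_zero_iff.mp hab; rfl
    | succ j ih =>
      rcases hab.eq_or_lt with rfl | hlt
      · rfl
      have haj : a ≤ j.castSucc := Fin.le_castSucc_iff.mpr hlt
      have hj : j.castSucc ∈ s := hs.out ha hb ⟨haj, Fin.castSucc_le_succ j⟩
      refine (ih hj haj).trans (Adj.reachable ?_)
      simp [pathGraph_adj]

end SimpleGraph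

open SimpleGraph

section BagLists

variable {α : Type*}

def bagIndices (L : List (Finset α)) (v : α) : Set ℕ := {i | v ∈ L.getD i ∅}

variable {L L₁ L₂ : List (Finset α)} {v : α} {i : ℕ}

theorem mem_bagIndices : i ∈ bagIndices L v ↔ v ∈ L.getD i ∅ := Iff.rfl

theorem lt_length_of_mem_bagIndices (hi : i ∈ bagIndices L v) : i < L.length := by
  by_contra h
  simp only [mem_bagIndices, List.getD_eq_default _ _ (not_lt.mp h)] at hi
  exact Finset.notMem_empty v hi

theorem mem_bagIndices_iff (hi : i < L.length) : i ∈ bagIndices L v ↔ v ∈ L[i] := by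
  simp only [mem_bagIndices, List.getD_eq_getElem _ _ hi]

theorem exists_mem_of_mem_bagIndices (hi : i ∈ bagIndices L v) : ∃ B ∈ L, v ∈ B :=
  have hL := lt_length_of_mem_bagIndices hi
  ⟨L[i], List.getElem_mem hL, (mem_bagIndices_iff hL).mp hi⟩

theorem ordConnected_bagIndices_singleton (B : Finset α) (v : α) :
    (bagIndices [B] v).OrdConnected := by
  refine ⟨fun i hi k hk j hj => ?_⟩
  have hk' := lt_length_of_mem_bagIndices hk
  simp only [List.length_singleton, Nat.lt_one_iff] at hk'
  obtain rfl : j = 0 := by have := hj.2; omega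
  obtain rfl : i = 0 := by have := hj.1; omega
  exact hi

theorem ordConnected_bagIndices_append
    (h₁ : (bagIndices L₁ v).OrdConnected) (h₂ : (bagIndices L₂ v).OrdConnected)
    (hglue : (∃ B ∈ L₁, v ∈ B) → (∃ B ∈ L₂, v ∈ B) →
      L₁.length - 1 ∈ bagIndices L₁ v ∧ 0 ∈ bagIndices L₂ v) :
    (bagIndices (L₁ ++ L₂) v).OrdConnected := by
  have left {i} (h : i < L₁.length) :
      i ∈ bagIndices (L₁ ++ L₂) v ↔ i ∈ bagIndices L₁ v := by
    simp only [mem_bagIndices, List.getD_append _ _ _ _ h]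
  have right {i} (h : L₁.length ≤ i) :
      i ∈ bagIndices (L₁ ++ L₂) v ↔ i - L₁.length ∈ bagIndices L₂ v := by
    simp only [mem_bagIndices, List.getD_append_right _ _ _ _ h]
  refine ⟨fun i hi k hk j hj => ?_⟩
  obtain ⟨hij, hjk⟩ := hj
  rcases lt_or_ge j L₁.length with hj₁ | hj₁
  · have hi₁ : i < L₁.length := by omega
    rw [left hi₁] at hi
    rw [left hj₁]
    rcases lt_or_ge k L₁.length with hk₁ | hk₁
    · exact h₁.out hi ((left hk₁).mp hk) ⟨hij, hjk⟩
    · have hend := (hglue (exists_mem_of_mem_bagIndices hi)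
        (exists_mem_of_mem_bagIndices ((right hk₁).mp hk))).1
      exact h₁.out hi hend ⟨hij, by omega⟩
  · have hk₁ : L₁.length ≤ k := by omega
    rw [right hk₁] at hk
    rw [right hj₁]
    rcases lt_or_ge i L₁.length with hi₁ | hi₁
    · have hstart := (hglue (exists_mem_of_mem_bagIndices ((left hi₁).mp hi))
        (exists_mem_of_mem_bagIndices hk)).2
      exact h₂.out hstart hk ⟨Nat.zero_le _, by omega⟩
    · exact h₂.out ((right hi₁).mp hi) hk ⟨by omega, by omega⟩

theorem ordConnected_bagIndices_cons {B : Finset α} (h : (bagIndices L v).OrdConnected)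
    (hglue : v ∈ B → (∃ B' ∈ L, v ∈ B') → 0 ∈ bagIndices L v) :
    (bagIndices (B :: L) v).OrdConnected :=
  ordConnected_bagIndices_append (L₁ := [B]) (ordConnected_bagIndices_singleton B v) h
    fun hB hL => ⟨by simpa [bagIndices] using hB, hglue (by simpa using hB) hL⟩

theorem mem_bagIndices_reverse :
    i ∈ bagIndices L.reverse v ↔ i < L.length ∧ L.length - 1 - i ∈ bagIndices L v := by
  constructor
  · intro hi
    have hL : i < L.length := by simpa using lt_length_of_mem_bagIndices hi
    simp only [mem_bagIndices, List.getD_reverse i hL] at hi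
    exact ⟨hL, hi⟩
  · rintro ⟨hL, hi⟩
    simp only [mem_bagIndices, List.getD_reverse i (by simpa using hL)]
    exact hi

theorem ordConnected_bagIndices_reverse (h : (bagIndices L v).OrdConnected) :
    (bagIndices L.reverse v).OrdConnected := by
  refine ⟨fun i hi k hk j ⟨hij, hjk⟩ => ?_⟩
  rw [mem_bagIndices_reverse] at hi hk ⊢
  exact ⟨by omega, h.out hk.2 hi.2 ⟨by omega, by omega⟩⟩

theorem mem_bagIndices_map_insert [DecidableEq α] {r : α} :
    i ∈ bagIndices (L.map (insert r)) v ↔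
      (v = r ∧ i < L.length) ∨ i ∈ bagIndices L v := by
  simp only [mem_bagIndices, List.getD_eq_getElem?_getD, List.getElem?_map]
  rcases lt_or_ge i L.length with hi | hi
  · simp [hi]
  · simp [hi.not_gt]

theorem ordConnected_bagIndices_map_insert [DecidableEq α] (r : α)
    (h : (bagIndices L v).OrdConnected) : (bagIndices (L.map (insert r)) v).OrdConnected := by
  by_cases hv : v = r
  · refine ⟨fun i hi k hk j ⟨hij, hjk⟩ => ?_⟩
    have := lt_length_of_mem_bagIndices hk
    simp only [List.length_map] at this
    exact mem_bagIndices_map_insert.mpr (.inl ⟨hv, by omega⟩)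
  · convert h using 1
    ext i
    simp [mem_bagIndices_map_insert, hv]

theorem last_mem_bagIndices_reverse (h : 0 ∈ bagIndices L v) :
    L.reverse.length - 1 ∈ bagIndices L.reverse v := by
  have := lt_length_of_mem_bagIndices h
  rw [mem_bagIndices_reverse, List.length_reverse]
  exact ⟨by omega, by rwa [Nat.sub_self]⟩

theorem zero_mem_bagIndices_map_insert_append [DecidableEq α] {r : α} (hL₁ : L₁ ≠ [])
    (L₂ : List (Finset α)) : 0 ∈ bagIndices (L₁.map (insert r) ++ L₂) r := by
  cases L₁ with
  | nil => exact absurd rfl hL₁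
  | cons B L₁ => simp [mem_bagIndices]

theorem bagIndices_map_subtype {p : α → Prop} [DecidablePred p]
    (L : List (Finset α)) (v : Subtype p) :
    bagIndices (L.map (Finset.subtype p)) v = bagIndices L v.1 := by
  ext i
  simp only [mem_bagIndices, List.getD_eq_getElem?_getD, List.getElem?_map]
  cases L[i]? <;> simp

end BagLists

section PathDecomposition

variable {V : Type} {G : SimpleGraph V} {n : ℕ} {bag : Fin n → Finset V}

theorem IsTreeDecomp.ordConnected (hT : IsTreeDecomp G (pathGraph n) bag) (v : V) :
    {i | v ∈ bag i}.OrdConnected :=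
  (connected_induce_pathGraph_iff.mp (hT.2.2.2 v)).2

theorem IsTreeDecomp.exists_mem_support_mem_bag (hT : IsTreeDecomp G (pathGraph n) bag)
    {u w : V} (p : G.Walk u w) {i t k : Fin n} (hit : i ≤ t) (htk : t ≤ k)
    (hu : u ∈ bag i) (hw : w ∈ bag k) : ∃ x ∈ p.support, x ∈ bag t := by
  induction p generalizing i with
  | nil => exact ⟨_, by simp, (hT.ordConnected _).out hu hw ⟨hit, htk⟩⟩
  | @cons u y w hadj p ih =>
    obtain ⟨j, huj, hyj⟩ := hT.2.2.1 u y hadj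
    by_cases htj : t ≤ j
    · exact ⟨u, by simp, (hT.ordConnected u).out hu huj ⟨hit, htj⟩⟩
    · obtain ⟨x, hx, hxt⟩ := ih (not_le.mp htj).le hyj hw
      exact ⟨x, by simp [hx], hxt⟩

theorem pathwidth_eq_of_bounds {w : ℕ}
    (hub : ∃ (n : ℕ) (bag : Fin n → Finset V),
      IsTreeDecomp G (pathGraph n) bag ∧ ∀ i, (bag i).card ≤ w + 1)
    (hlb : ∀ (n : ℕ) (bag : Fin n → Finset V),
      IsTreeDecomp G (pathGraph n) bag → ∃ i, w + 1 ≤ (bag i).card) :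
    pathwidth G = w := by
  refine le_antisymm (Nat.sInf_le hub) (le_csInf ⟨w, hub⟩ ?_)
  rintro w' ⟨n, bag, hT, hcard⟩
  obtain ⟨i, hi⟩ := hlb n bag hT
  have := hcard i
  omega

theorem isTreeDecomp_pathGraph_of_list (L : List (Finset V)) (hL : L ≠ [])
    (hcover : ∀ v, ∃ B ∈ L, v ∈ B)
    (hedge : ∀ u v, G.Adj u v → ∃ B ∈ L, u ∈ B ∧ v ∈ B)
    (hcontig : ∀ v, (bagIndices L v).OrdConnected) :
    IsTreeDecomp G (pathGraph L.length) (fun i => L[i]) := by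
  have hmem {v} {i : Fin L.length} : v ∈ L[i] ↔ (i : ℕ) ∈ bagIndices L v :=
    (mem_bagIndices_iff i.2).symm
  refine ⟨isTree_pathGraph (by simpa using hL), fun v => ?_, fun u v huv => ?_, fun v => ?_⟩
  · obtain ⟨B, hB, hv⟩ := hcover v
    obtain ⟨i, hi, rfl⟩ := List.mem_iff_getElem.mp hB
    exact ⟨⟨i, hi⟩, hv⟩
  · obtain ⟨B, hB, hu, hv⟩ := hedge u v huv
    obtain ⟨i, hi, rfl⟩ := List.mem_iff_getElem.mp hB
    exact ⟨⟨i, hi⟩, hu, hv⟩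
  · refine connected_induce_pathGraph_iff.mpr ⟨?_, ?_⟩
    · obtain ⟨B, hB, hv⟩ := hcover v
      obtain ⟨i, hi, rfl⟩ := List.mem_iff_getElem.mp hB
      exact ⟨⟨i, hi⟩, hv⟩
    · simp_rw [hmem]
      exact (hcontig v).preimage_mono fun _ _ h => h

end PathDecomposition

theorem List.IsSuffix.eq_of_length_eq {α : Type*} {l₁ l₂ l : List α} (h₁ : l₁ <:+ l)
    (h₂ : l₂ <:+ l) (hlen : l₁.length = l₂.length) : l₁ = l₂ :=
  (List.suffix_of_suffix_length_le h₁ h₂ hlen.le).eq_of_length hlen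

section Subtree

/-- Vertices are read from the leaf end, so the descendants of `r` are the lists having `r` as
a suffix. -/
def subtree (m : ℕ) (r : List Bool) : Set (List Bool) :=
  {v | r <:+ v ∧ v.length ≤ r.length + m}

variable {m : ℕ} {r v : List Bool} {x : Bool}

theorem mem_subtree_self : r ∈ subtree m r := ⟨List.suffix_refl r, by omega⟩

theorem cons_mem_subtree_succ : x :: r ∈ subtree (m + 1) r :=
  ⟨List.suffix_cons x r, by simp⟩

theorem subtree_cons_subset : subtree m (x :: r) ⊆ subtree (m + 1) r := fun _ ⟨hs, hl⟩ =>
  ⟨(List.suffix_cons x r).trans hs, by simp only [List.length_cons] at hl; omega⟩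

theorem mem_subtree_nil {h : ℕ} : v ∈ subtree h [] ↔ v.length ≤ h := by
  simp [subtree]

theorem mem_subtree_zero : v ∈ subtree 0 r ↔ v = r :=
  ⟨fun ⟨hs, hl⟩ => (hs.eq_of_length (by have := hs.length_le; omega)).symm,
    fun h => h ▸ mem_subtree_self⟩

theorem mem_subtree_succ :
    v ∈ subtree (m + 1) r ↔ v = r ∨ ∃ x, v ∈ subtree m (x :: r) := by
  refine ⟨fun ⟨⟨t, ht⟩, hl⟩ => ?_, ?_⟩
  · subst ht
    rcases List.eq_nil_or_concat t with rfl | ⟨t', x, rfl⟩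
    · exact .inl rfl
    · exact .inr ⟨x, ⟨t', by simp⟩, by simp at hl ⊢; omega⟩
  · rintro (rfl | ⟨x, hx⟩)
    exacts [mem_subtree_self, subtree_cons_subset hx]

theorem ne_of_mem_subtree_cons (hv : v ∈ subtree m (x :: r)) : v ≠ r := by
  rintro rfl
  simpa using hv.1.length_le

theorem eq_of_mem_subtree_cons {m' : ℕ} {y : Bool} (hx : v ∈ subtree m (x :: r))
    (hy : v ∈ subtree m' (y :: r)) : x = y := by
  simpa using hx.1.eq_of_length_eq hy.1 (by simp)

theorem edge_mem_subtree_succ (hv : v ∈ subtree (m + 1) r) (hxv : x :: v ∈ subtree (m + 1) r) :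
    v = r ∨ ∃ y, v ∈ subtree m (y :: r) ∧ x :: v ∈ subtree m (y :: r) := by
  refine (mem_subtree_succ.mp hv).imp_right fun ⟨y, hy⟩ => ⟨y, hy, ?_⟩
  exact ⟨hy.1.trans (List.suffix_cons x v), by have := hxv.2; simp_all; omega⟩

end Subtree

section UpperBound

structure IsSubtreeDecomp (m : ℕ) (r : List Bool) (L : List (Finset (List Bool))) : Prop where
  subset : ∀ B ∈ L, ∀ v ∈ B, v ∈ subtree m r
  cover : ∀ v ∈ subtree m r, ∃ B ∈ L, v ∈ B
  cover_edge : ∀ (x : Bool) (v : List Bool), v ∈ subtree m r → x :: v ∈ subtree m r →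
    ∃ B ∈ L, v ∈ B ∧ x :: v ∈ B
  ordConnected : ∀ v, (bagIndices L v).OrdConnected

variable {m : ℕ} {r : List Bool} {L₀ L₁ : List (Finset (List Bool))}

theorem isSubtreeDecomp_zero (r : List Bool) : IsSubtreeDecomp 0 r [{r}] where
  subset := by simp [mem_subtree_zero]
  cover := by simp [mem_subtree_zero]
  cover_edge x v hv hxv := by
    rw [mem_subtree_zero] at hv hxv
    subst hv
    simp at hxv
  ordConnected v := ordConnected_bagIndices_singleton _ _

theorem IsSubtreeDecomp.ne_nil {L : List (Finset (List Bool))} (hL : IsSubtreeDecomp m r L) :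
    L ≠ [] := by
  obtain ⟨B, hB, -⟩ := hL.cover r mem_subtree_self
  exact List.ne_nil_of_mem hB

theorem IsSubtreeDecomp.ordConnected_join (h₀ : IsSubtreeDecomp m (false :: r) L₀)
    (h₁ : IsSubtreeDecomp m (true :: r) L₁) (hd₀ : 0 ∈ bagIndices L₀ (false :: r))
    (hd₁ : 0 ∈ bagIndices L₁ (true :: r)) (v : List Bool) :
    (bagIndices (L₀.reverse ++ {false :: r, r} :: {r, true :: r} :: L₁) v).OrdConnected := by
  refine ordConnected_bagIndices_append (ordConnected_bagIndices_reverse (h₀.ordConnected v))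
    (ordConnected_bagIndices_cons (ordConnected_bagIndices_cons (h₁.ordConnected v) ?_) ?_) ?_
  · rintro hv ⟨B, hB, hvB⟩
    have hv₁ := h₁.subset B hB v hvB
    rcases Finset.mem_insert.mp hv with rfl | hv
    · exact absurd rfl (ne_of_mem_subtree_cons hv₁)
    · rwa [Finset.mem_singleton.mp hv]
  · rintro hv ⟨B, hB, hvB⟩
    rcases Finset.mem_insert.mp hv with rfl | hv
    · rcases List.mem_cons.mp hB with rfl | hB
      · simp at hvB
      · cases eq_of_mem_subtree_cons (m := 0) mem_subtree_self (h₁.subset B hB _ hvB)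
    · simp [mem_bagIndices, Finset.mem_singleton.mp hv]
  · rintro ⟨B, hB, hvB⟩ ⟨B', hB', hvB'⟩
    have hv₀ := h₀.subset B (List.mem_reverse.mp hB) v hvB
    obtain rfl : v = false :: r := by
      simp only [List.mem_cons] at hB'
      rcases hB' with rfl | rfl | hB'
      · simpa [ne_of_mem_subtree_cons hv₀] using hvB'
      · simp only [Finset.mem_insert, Finset.mem_singleton, ne_of_mem_subtree_cons hv₀,
          false_or] at hvB'
        subst hvB'
        cases eq_of_mem_subtree_cons (m' := 0) hv₀ mem_subtree_self
      · cases eq_of_mem_subtree_cons hv₀ (h₁.subset B' hB' v hvB')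
    exact ⟨last_mem_bagIndices_reverse hd₀, by simp [mem_bagIndices]⟩

theorem IsSubtreeDecomp.join (h₀ : IsSubtreeDecomp m (false :: r) L₀)
    (h₁ : IsSubtreeDecomp m (true :: r) L₁) (hd₀ : 0 ∈ bagIndices L₀ (false :: r))
    (hd₁ : 0 ∈ bagIndices L₁ (true :: r)) :
    IsSubtreeDecomp (m + 1) r (L₀.reverse ++ {false :: r, r} :: {r, true :: r} :: L₁) where
  subset B hB v hv := by
    simp only [List.mem_append, List.mem_reverse, List.mem_cons] at hB
    rcases hB with hB | rfl | rfl | hB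
    · exact subtree_cons_subset (h₀.subset B hB v hv)
    · rcases Finset.mem_insert.mp hv with rfl | hv
      exacts [cons_mem_subtree_succ, Finset.mem_singleton.mp hv ▸ mem_subtree_self]
    · rcases Finset.mem_insert.mp hv with rfl | hv
      exacts [mem_subtree_self, Finset.mem_singleton.mp hv ▸ cons_mem_subtree_succ]
    · exact subtree_cons_subset (h₁.subset B hB v hv)
  cover v hv := by
    rcases mem_subtree_succ.mp hv with rfl | ⟨_ | _, hx⟩
    · exact ⟨{false :: v, v}, by simp, by simp⟩
    · obtain ⟨B, hB, hvB⟩ := h₀.cover v hx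
      exact ⟨B, by simp [hB], hvB⟩
    · obtain ⟨B, hB, hvB⟩ := h₁.cover v hx
      exact ⟨B, by simp [hB], hvB⟩
  cover_edge x v hv hxv := by
    rcases edge_mem_subtree_succ hv hxv with rfl | ⟨_ | _, hy, hxy⟩
    · cases x
      · exact ⟨{false :: v, v}, by simp, by simp⟩
      · exact ⟨{v, true :: v}, by simp, by simp⟩
    · obtain ⟨B, hB, hvB⟩ := h₀.cover_edge x v hy hxy
      exact ⟨B, by simp [hB], hvB⟩
    · obtain ⟨B, hB, hvB⟩ := h₁.cover_edge x v hy hxy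
      exact ⟨B, by simp [hB], hvB⟩
  ordConnected := h₀.ordConnected_join h₁ hd₀ hd₁

theorem IsSubtreeDecomp.ordConnected_extend_spine (h₁ : IsSubtreeDecomp m (true :: r) L₁)
    (h₀ : IsSubtreeDecomp m (false :: r) L₀) (hd₀ : 0 ∈ bagIndices L₀ (false :: r))
    (v : List Bool) :
    (bagIndices (L₁.map (insert r) ++ {r, false :: r} :: L₀) v).OrdConnected := by
  refine ordConnected_bagIndices_append
    (ordConnected_bagIndices_map_insert r (h₁.ordConnected v))
    (ordConnected_bagIndices_cons (h₀.ordConnected v) ?_) ?_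
  · rintro hv ⟨B, hB, hvB⟩
    have hv₀ := h₀.subset B hB v hvB
    rcases Finset.mem_insert.mp hv with rfl | hv
    · exact absurd rfl (ne_of_mem_subtree_cons hv₀)
    · rwa [Finset.mem_singleton.mp hv]
  · rintro ⟨B, hB, hvB⟩ ⟨B', hB', hvB'⟩
    obtain rfl : v = r := by
      obtain ⟨B₁, hB₁, rfl⟩ := List.mem_map.mp hB
      refine (Finset.mem_insert.mp hvB).resolve_right fun hvB₁ => ?_
      have hv₁ := h₁.subset B₁ hB₁ v hvB₁
      rcases List.mem_cons.mp hB' with rfl | hB'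
      · rcases Finset.mem_insert.mp hvB' with rfl | hvB'
        · exact ne_of_mem_subtree_cons hv₁ rfl
        · obtain rfl := Finset.mem_singleton.mp hvB'
          cases eq_of_mem_subtree_cons (m' := 0) hv₁ mem_subtree_self
      · cases eq_of_mem_subtree_cons hv₁ (h₀.subset B' hB' v hvB')
    have hL₁ := List.length_pos_iff.mpr h₁.ne_nil
    exact ⟨mem_bagIndices_map_insert.mpr (.inl ⟨rfl, by simp; omega⟩),
      by simp [mem_bagIndices]⟩

theorem IsSubtreeDecomp.extend_spine (h₁ : IsSubtreeDecomp m (true :: r) L₁)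
    (h₀ : IsSubtreeDecomp m (false :: r) L₀) (hd₀ : 0 ∈ bagIndices L₀ (false :: r)) :
    IsSubtreeDecomp (m + 1) r (L₁.map (insert r) ++ {r, false :: r} :: L₀) where
  subset B hB v hv := by
    simp only [List.mem_append, List.mem_map, List.mem_cons] at hB
    rcases hB with ⟨B, hB, rfl⟩ | rfl | hB
    · rcases Finset.mem_insert.mp hv with rfl | hv
      exacts [mem_subtree_self, subtree_cons_subset (h₁.subset B hB v hv)]
    · rcases Finset.mem_insert.mp hv with rfl | hv
      exacts [mem_subtree_self, Finset.mem_singleton.mp hv ▸ cons_mem_subtree_succ]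
    · exact subtree_cons_subset (h₀.subset B hB v hv)
  cover v hv := by
    rcases mem_subtree_succ.mp hv with rfl | ⟨_ | _, hx⟩
    · exact ⟨{v, false :: v}, by simp, by simp⟩
    · obtain ⟨B, hB, hvB⟩ := h₀.cover v hx
      exact ⟨B, by simp [hB], hvB⟩
    · obtain ⟨B, hB, hvB⟩ := h₁.cover v hx
      exact ⟨insert r B, List.mem_append_left _ (List.mem_map_of_mem hB), by simp [hvB]⟩
  cover_edge x v hv hxv := by
    rcases edge_mem_subtree_succ hv hxv with rfl | ⟨_ | _, hy, hxy⟩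
    · cases x
      · exact ⟨{v, false :: v}, by simp, by simp⟩
      · obtain ⟨B, hB, hvB⟩ := h₁.cover _ mem_subtree_self
        exact ⟨insert v B, List.mem_append_left _ (List.mem_map_of_mem hB), by simp,
          by simp [hvB]⟩
    · obtain ⟨B, hB, hvB⟩ := h₀.cover_edge x v hy hxy
      exact ⟨B, by simp [hB], hvB⟩
    · obtain ⟨B, hB, hvB, hxvB⟩ := h₁.cover_edge x v hy hxy
      exact ⟨insert r B, List.mem_append_left _ (List.mem_map_of_mem hB), by simp [hvB],
        by simp [hxvB]⟩
  ordConnected := h₁.ordConnected_extend_spine h₀ hd₀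

def subtreeDecomps : ℕ → List Bool → List (Finset (List Bool)) × List (Finset (List Bool))
  | 0, r => ([{r}], [{r}])
  | m + 1, r =>
    ((subtreeDecomps m (false :: r)).2.reverse ++
        {false :: r, r} :: {r, true :: r} :: (subtreeDecomps m (true :: r)).2,
      (subtreeDecomps m (true :: r)).1.map (insert r) ++
        {r, false :: r} :: (subtreeDecomps m (false :: r)).2)

/-- `spineDecomp m r` runs down the leftmost branch below `r`, keeping the current branch vertex
in every bag while the subtree hanging to its right is handled by `pathDecomp`; it has `r` in
its first bag and width `⌊m / 2⌋ + 1`. `pathDecomp m r` glues the spine decompositions of the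
two children of `r` back to back through `r`, which brings the width down to `⌈m / 2⌉`. -/
def pathDecomp (m : ℕ) (r : List Bool) : List (Finset (List Bool)) := (subtreeDecomps m r).1

def spineDecomp (m : ℕ) (r : List Bool) : List (Finset (List Bool)) := (subtreeDecomps m r).2

theorem pathDecomp_zero (r : List Bool) : pathDecomp 0 r = [{r}] := rfl

theorem spineDecomp_zero (r : List Bool) : spineDecomp 0 r = [{r}] := rfl

theorem pathDecomp_succ (m : ℕ) (r : List Bool) :
    pathDecomp (m + 1) r = (spineDecomp m (false :: r)).reverse ++
      {false :: r, r} :: {r, true :: r} :: spineDecomp m (true :: r) := rfl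

theorem spineDecomp_succ (m : ℕ) (r : List Bool) :
    spineDecomp (m + 1) r =
      (pathDecomp m (true :: r)).map (insert r) ++ {r, false :: r} :: spineDecomp m (false :: r) :=
  rfl

theorem isSubtreeDecomp_pathDecomp_spineDecomp (m : ℕ) (r : List Bool) :
    IsSubtreeDecomp m r (pathDecomp m r) ∧ IsSubtreeDecomp m r (spineDecomp m r) ∧
      0 ∈ bagIndices (spineDecomp m r) r := by
  induction m generalizing r with
  | zero =>
    exact ⟨isSubtreeDecomp_zero r, isSubtreeDecomp_zero r,
      by simp [mem_bagIndices, spineDecomp_zero]⟩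
  | succ m ih =>
    obtain ⟨-, hS₀, hd₀⟩ := ih (false :: r)
    obtain ⟨hP₁, hS₁, hd₁⟩ := ih (true :: r)
    rw [pathDecomp_succ, spineDecomp_succ]
    exact ⟨hS₀.join hS₁ hd₀ hd₁, hP₁.extend_spine hS₀ hd₀,
      zero_mem_bagIndices_map_insert_append hP₁.ne_nil _⟩

theorem card_le_of_mem_pathDecomp_spineDecomp (m : ℕ) (r : List Bool) :
    (∀ B ∈ pathDecomp m r, B.card ≤ (m + 1) / 2 + 1) ∧
      ∀ B ∈ spineDecomp m r, B.card ≤ m / 2 + 2 := by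
  induction m generalizing r with
  | zero => simp [pathDecomp_zero, spineDecomp_zero]
  | succ m ih =>
    have hpair (a b : List Bool) : ({a, b} : Finset (List Bool)).card ≤ 2 := Finset.card_le_two
    refine ⟨fun B hB => ?_, fun B hB => ?_⟩
    · simp only [pathDecomp_succ, List.mem_append, List.mem_reverse, List.mem_cons] at hB
      rcases hB with hB | rfl | rfl | hB
      · have := (ih _).2 B hB; omega
      · have := hpair (false :: r) r; omega
      · have := hpair r (true :: r); omega
      · have := (ih _).2 B hB; omega
    · simp only [spineDecomp_succ, List.mem_append, List.mem_map, List.mem_cons] at hB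
      rcases hB with ⟨B, hB, rfl⟩ | rfl | hB
      · have := (ih _).1 B hB; have := Finset.card_insert_le r B; omega
      · have := hpair r (false :: r); omega
      · have := (ih _).2 B hB; omega

theorem exists_pathDecomp_completeBinaryTree (h : ℕ) :
    ∃ (n : ℕ) (bag : Fin n → Finset {l : List Bool // l.length ≤ h}),
      IsTreeDecomp (completeBinaryTree h) (pathGraph n) bag ∧
        ∀ i, (bag i).card ≤ (h + 1) / 2 + 1 := by
  obtain ⟨hD, -, -⟩ := isSubtreeDecomp_pathDecomp_spineDecomp h []
  have hcard := (card_le_of_mem_pathDecomp_spineDecomp h []).1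
  set L := (pathDecomp h []).map (Finset.subtype fun l : List Bool => l.length ≤ h)
  have hcover (v : {l : List Bool // l.length ≤ h}) : ∃ B ∈ L, v ∈ B := by
    obtain ⟨B, hB, hv⟩ := hD.cover v.1 (mem_subtree_nil.mpr v.2)
    exact ⟨_, List.mem_map_of_mem hB, Finset.mem_subtype.mpr hv⟩
  have hedge (x : Bool) (u v : {l : List Bool // l.length ≤ h}) (huv : v.1 = x :: u.1) :
      ∃ B ∈ L, u ∈ B ∧ v ∈ B := by
    obtain ⟨B, hB, hu, hv⟩ := hD.cover_edge x u.1 (mem_subtree_nil.mpr u.2)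
      (huv ▸ mem_subtree_nil.mpr v.2)
    exact ⟨_, List.mem_map_of_mem hB, Finset.mem_subtype.mpr hu,
      Finset.mem_subtype.mpr (huv ▸ hv)⟩
  refine ⟨L.length, fun i => L[i], isTreeDecomp_pathGraph_of_list L ?_ hcover ?_ ?_,
    fun i => ?_⟩
  · obtain ⟨B, hB, -⟩ := hcover ⟨[], Nat.zero_le h⟩
    exact List.ne_nil_of_mem hB
  · rintro u v ⟨-, ⟨x, hx⟩ | ⟨x, hx⟩⟩
    · exact hedge x u v hx
    · obtain ⟨B, hB, hv, hu⟩ := hedge x v u hx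
      exact ⟨B, hB, hu, hv⟩
  · intro v
    rw [bagIndices_map_subtype]
    exact hD.ordConnected v.1
  · have hB : L[i] ∈ L := List.getElem_mem _
    obtain ⟨B, hB, hBi⟩ := List.mem_map.mp hB
    show L[i].card ≤ _
    rw [← hBi, Finset.card_subtype]
    exact (Finset.card_filter_le _ _).trans (hcard B hB)

end UpperBound

theorem exists_le_le_of_ne {ι α : Type*} [LinearOrder α] (f : ι → α) {a b c : ι}
    (hab : a ≠ b) (hbc : b ≠ c) (hac : a ≠ c) :
    ∃ x y z, y ≠ x ∧ y ≠ z ∧ f x ≤ f y ∧ f y ≤ f z := by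
  rcases le_total (f a) (f b) with h₁ | h₁ <;> rcases le_total (f b) (f c) with h₂ | h₂ <;>
    rcases le_total (f a) (f c) with h₃ | h₃
  all_goals first
    | exact ⟨a, b, c, hab.symm, hbc, h₁, h₂⟩
    | exact ⟨c, b, a, hbc, hab.symm, h₂, h₁⟩
    | exact ⟨b, a, c, hab, hac, h₁, h₃⟩
    | exact ⟨c, a, b, hac, hab, h₃, h₁⟩
    | exact ⟨a, c, b, hac.symm, hbc.symm, h₃, h₂⟩
    | exact ⟨b, c, a, hbc.symm, hac.symm, h₂, h₃⟩

section LowerBound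

open scoped Finset

variable {h n : ℕ} {bag : Fin n → Finset {l : List Bool // l.length ≤ h}}

theorem completeBinaryTree_adj_cons {l : List Bool} (x : Bool) (hl : (x :: l).length ≤ h) :
    (completeBinaryTree h).Adj ⟨l, by simp at hl; omega⟩ ⟨x :: l, hl⟩ :=
  (fromRel_adj _ _ _).mpr ⟨by simp, .inl ⟨x, rfl⟩⟩

theorem exists_walk_completeBinaryTree_to_suffix {r : List Bool} (hr : r.length ≤ h)
    (u : {l : List Bool // l.length ≤ h}) (hu : r <:+ u.1) :
    ∃ p : (completeBinaryTree h).Walk u ⟨r, hr⟩,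
      ∀ x ∈ p.support, r <:+ x.1 ∧ x.1 <:+ u.1 := by
  obtain ⟨u, hlen⟩ := u
  obtain ⟨s, rfl⟩ := hu
  induction s with
  | nil => exact ⟨.nil, by simp⟩
  | cons y s ih =>
    obtain ⟨p, hp⟩ := ih (by simp at hlen ⊢; omega)
    refine ⟨.cons (completeBinaryTree_adj_cons y hlen).symm p, ?_⟩
    simp only [Walk.support_cons, List.mem_cons, forall_eq_or_imp]
    exact ⟨⟨⟨y :: s, rfl⟩, List.suffix_refl _⟩,
      fun x hx => (hp x hx).imp_right fun hxs => hxs.trans (List.suffix_cons y _)⟩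

theorem exists_walk_completeBinaryTree_via_suffix {r : List Bool}
    (u w : {l : List Bool // l.length ≤ h}) (hu : r <:+ u.1) (hw : r <:+ w.1) :
    ∃ p : (completeBinaryTree h).Walk u w,
      ∀ x ∈ p.support, r <:+ x.1 ∧ (x.1 <:+ u.1 ∨ x.1 <:+ w.1) := by
  have hr := hu.length_le.trans u.2
  obtain ⟨p, hp⟩ := exists_walk_completeBinaryTree_to_suffix hr u hu
  obtain ⟨q, hq⟩ := exists_walk_completeBinaryTree_to_suffix hr w hw
  refine ⟨p.append q.reverse, fun x hx => ?_⟩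
  rw [Walk.mem_support_append_iff, Walk.support_reverse, List.mem_reverse] at hx
  exact hx.elim (fun hx => (hp x hx).imp_right .inl) fun hx => (hq x hx).imp_right .inr

theorem IsTreeDecomp.card_filter_suffix_lt
    (hT : IsTreeDecomp (completeBinaryTree h) (pathGraph n) bag) {r a b c : List Bool}
    (ha : r <:+ a) (hb : r <:+ b) (hc : r <:+ c) (hab : a.length = b.length)
    (hcb : c.length = b.length) (hba : b ≠ a) (hbc : b ≠ c) {ta tb tc : Fin n}
    (h₁ : ta ≤ tb) (h₂ : tb ≤ tc) (hua : ∃ u ∈ bag ta, a <:+ u.1)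
    (hwc : ∃ w ∈ bag tc, c <:+ w.1) :
    #{v ∈ bag tb | b <:+ v.1} < #{v ∈ bag tb | r <:+ v.1} := by
  obtain ⟨u, hu, hau⟩ := hua
  obtain ⟨w, hw, hcw⟩ := hwc
  obtain ⟨p, hp⟩ := exists_walk_completeBinaryTree_via_suffix u w (ha.trans hau) (hc.trans hcw)
  obtain ⟨x, hx, hxt⟩ := hT.exists_mem_support_mem_bag p h₁ h₂ hu hw
  obtain ⟨hrx, hxuw⟩ := hp x hx
  have hbx : ¬ b <:+ x.1 := fun hbx => hxuw.elim
    (fun hxu => hba ((hbx.trans hxu).eq_of_length_eq hau hab.symm))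
    (fun hxw => hbc ((hbx.trans hxw).eq_of_length_eq hcw hcb.symm))
  refine Finset.card_lt_card ((Finset.ssubset_iff_of_subset fun v hv => ?_).mpr ?_)
  · rw [Finset.mem_filter] at hv ⊢
    exact ⟨hv.1, hb.trans hv.2⟩
  · exact ⟨x, Finset.mem_filter.mpr ⟨hxt, hrx⟩, fun hx => hbx (Finset.mem_filter.mp hx).2⟩

theorem IsTreeDecomp.exists_card_filter_suffix_ge
    (hT : IsTreeDecomp (completeBinaryTree h) (pathGraph n) bag) (m : ℕ) :
    ∀ r : List Bool, r.length + m = h →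
      ∃ i, (m + 1) / 2 + 1 ≤ #{v ∈ bag i | r <:+ v.1} := by
  induction m using Nat.strong_induction_on with | _ m ih => ?_
  intro r hr
  match m, ih with
  | 0, _ =>
    obtain ⟨i, hi⟩ := hT.2.1 ⟨r, by omega⟩
    exact ⟨i, Finset.card_pos.mpr ⟨_, Finset.mem_filter.mpr ⟨hi, List.suffix_refl r⟩⟩⟩
  | 1, _ =>
    obtain ⟨i, hri, hfri⟩ :=
      hT.2.2.1 _ _ (completeBinaryTree_adj_cons (l := r) false (by simp; omega))
    refine ⟨i, Finset.one_lt_card.mpr ⟨_, Finset.mem_filter.mpr ⟨hri, List.suffix_refl r⟩,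
      _, Finset.mem_filter.mpr ⟨hfri, List.suffix_cons false r⟩, by simp⟩⟩
  | m + 2, ih =>
    let g (p : Bool × Bool) : List Bool := p.1 :: p.2 :: r
    choose t ht using fun p => ih m (by omega) (g p) (by simp [g]; omega)
    have hex (p : Bool × Bool) : ∃ u ∈ bag (t p), g p <:+ u.1 := by
      obtain ⟨u, hu⟩ := (Finset.card_pos (s := {v ∈ bag (t p) | g p <:+ v.1})).mp
        (by have := ht p; omega)
      exact ⟨u, Finset.mem_filter.mp hu⟩
    have hg (p : Bool × Bool) : r <:+ g p := (List.suffix_cons _ r).trans (List.suffix_cons _ _)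
    have hne {p q : Bool × Bool} (hqp : q ≠ p) : g q ≠ g p := by
      simpa [g, Prod.ext_iff] using hqp
    obtain ⟨p, q, s, hqp, hqs, h₁, h₂⟩ := exists_le_le_of_ne t
      (a := (false, false)) (b := (false, true)) (c := (true, false)) (by simp) (by simp) (by simp)
    have := hT.card_filter_suffix_lt (hg p) (hg q) (hg s) rfl rfl (hne hqp) (hne hqs) h₁ h₂
      (hex p) (hex s)
    exact ⟨t q, by have := ht q; omega⟩

theorem IsTreeDecomp.exists_card_bag_ge
    (hT : IsTreeDecomp (completeBinaryTree h) (pathGraph n) bag) :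
    ∃ i, (h + 1) / 2 + 1 ≤ (bag i).card := by
  obtain ⟨i, hi⟩ := hT.exists_card_filter_suffix_ge h [] (by simp)
  exact ⟨i, hi.trans (Finset.card_filter_le _ _)⟩

end LowerBound

theorem pathwidth_completeBinaryTree_general (h : ℕ) :
    pathwidth (completeBinaryTree h) = (h + 1) / 2 :=
  pathwidth_eq_of_bounds (exists_pathDecomp_completeBinaryTree h)
    fun _ _ hT => hT.exists_card_bag_ge

/-- For every `h ≥ 1`, the complete binary tree of height `h` has pathwidth exactly
`⌈h / 2⌉ = (h + 1) / 2` (natural number division). -/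
theorem pathwidth_completeBinaryTree (h : ℕ) (hh : 1 ≤ h) :
    pathwidth (completeBinaryTree h) = (h + 1) / 2 :=
  pathwidth_completeBinaryTree_general h
end

section
/- Let G = (V, E) be a finite simple graph, let m ≥ 1, and for each vertex v ∈ V let H_v be a finite simple graph on at most m vertices, with the vertex sets of the H_v pairwise disjoint. Let G' be any graph whose vertex set is the disjoint union of the vertex sets of the H_v, whose edge set contains all edges of each H_v, and whose remaining edges are as follows: for each edge {u, v} ∈ E there is exactly one edge of G' joining some vertex of H_u to some vertex of H_v (and there are no other edges). Then tw(G') + 1 ≤ m · (tw(G) + 1); in particular tw(G') ≤ m · (tw(G) + 1) − 1. -/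
open Finset SimpleGraph

section TreeDecomp

variable {V V' : Type} {G : SimpleGraph V} {G' : SimpleGraph V'}

variable (G) in
theorem isTreeDecomp_univ [Fintype V] :
    IsTreeDecomp G (⊥ : SimpleGraph (Fin 1)) fun _ => univ :=
  ⟨⟨(connected_iff _).2 ⟨Preconnected.of_subsingleton, ⟨0⟩⟩, isAcyclic_bot⟩,
    fun _ => ⟨0, mem_univ _⟩, fun _ _ _ => ⟨0, mem_univ _, mem_univ _⟩,
    fun v => (connected_iff _).2 ⟨Preconnected.of_subsingleton, ⟨⟨0, mem_univ v⟩⟩⟩⟩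

variable (G) in
theorem exists_isTreeDecomp_card_le_treewidth [Fintype V] :
    ∃ (n : ℕ) (T : SimpleGraph (Fin n)) (bag : Fin n → Finset V),
      IsTreeDecomp G T bag ∧ ∀ i, #(bag i) ≤ treewidth G + 1 :=
  Nat.sInf_mem (s := {w | ∃ (n : ℕ) (T : SimpleGraph (Fin n)) (bag : Fin n → Finset V),
      IsTreeDecomp G T bag ∧ ∀ i, #(bag i) ≤ w + 1})
    ⟨Fintype.card V, 1, ⊥, _, isTreeDecomp_univ G, by simp⟩

theorem treewidth_le_of_isTreeDecomp {n : ℕ} {T : SimpleGraph (Fin n)} {bag : Fin n → Finset V}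
    (h : IsTreeDecomp G T bag) {w : ℕ} (hw : ∀ i, #(bag i) ≤ w + 1) : treewidth G ≤ w :=
  Nat.sInf_le ⟨n, T, bag, h, hw⟩

theorem IsTreeDecomp.comap [Fintype V'] [DecidableEq V] (f : V' → V)
    (hf : ∀ a b, G'.Adj a b → f a ≠ f b → G.Adj (f a) (f b))
    {n : ℕ} {T : SimpleGraph (Fin n)} {bag : Fin n → Finset V} (h : IsTreeDecomp G T bag) :
    IsTreeDecomp G' T fun i => {a | f a ∈ bag i} := by
  obtain ⟨hT, hcover, hedge, hconn⟩ := h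
  refine ⟨hT, fun a => ?_, fun a b hab => ?_, fun a => ?_⟩
  · simpa using hcover (f a)
  · by_cases hfab : f a = f b
    · obtain ⟨i, hi⟩ := hcover (f a)
      exact ⟨i, by simpa [← hfab]⟩
    · simpa using hedge _ _ (hf a b hab hfab)
  · have hset : {i | a ∈ ({a | f a ∈ bag i} : Finset V')} = {i | f a ∈ bag i} := by
      ext; simp
    exact hset ▸ hconn (f a)

theorem treewidth_add_one_le_mul_of_card_fiber_le [Fintype V] [Fintype V'] [DecidableEq V]
    (f : V' → V) (hf : ∀ a b, G'.Adj a b → f a ≠ f b → G.Adj (f a) (f b))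
    {m : ℕ} (hm : 1 ≤ m) (hfiber : ∀ v, #{a | f a = v} ≤ m) :
    treewidth G' + 1 ≤ m * (treewidth G + 1) := by
  obtain ⟨n, T, bag, hdecomp, hbag⟩ := exists_isTreeDecomp_card_le_treewidth G
  have hbag' (i : Fin n) : #{a | f a ∈ bag i} ≤ m * (treewidth G + 1) :=
    calc #{a | f a ∈ bag i} ≤ m * #(bag i) :=
          card_le_mul_card_image_of_maps_to (f := f) (by simp) m fun v _ =>
            (card_le_card (filter_subset_filter _ (subset_univ _))).trans (hfiber v)
      _ ≤ m * (treewidth G + 1) := Nat.mul_le_mul_left m (hbag i)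
  have hpos : 0 < m * (treewidth G + 1) := Nat.mul_pos hm (Nat.succ_pos _)
  have hwidth : treewidth G' ≤ m * (treewidth G + 1) - 1 :=
    treewidth_le_of_isTreeDecomp (hdecomp.comap f hf) fun i => by have := hbag' i; omega
  omega

end TreeDecomp

theorem card_sigma_fst_fiber {V : Type} {W : V → Type} [Fintype V] [∀ v, Fintype (W v)]
    [DecidableEq V] (v : V) : #{a : Σ v, W v | a.1 = v} = Fintype.card (W v) := by
  rw [← Fintype.card_subtype, Fintype.card_congr (Equiv.sigmaSubtype v)]

theorem treewidth_blowup_general {V : Type} [Fintype V] (G : SimpleGraph V) (m : ℕ) (hm : 1 ≤ m)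
    {W : V → Type} [∀ v, Fintype (W v)] (hW : ∀ v, Fintype.card (W v) ≤ m)
    (G' : SimpleGraph (Σ v : V, W v))
    (hnone : ∀ u v : V, u ≠ v → ¬ G.Adj u v →
      ∀ (x : W u) (y : W v), ¬ G'.Adj ⟨u, x⟩ ⟨v, y⟩) :
    treewidth G' + 1 ≤ m * (treewidth G + 1) ∧
    treewidth G' ≤ m * (treewidth G + 1) - 1 := by
  classical
  have hcontract (a b : Σ v, W v) (hab : G'.Adj a b) (hne : a.1 ≠ b.1) : G.Adj a.1 b.1 :=
    not_not.1 fun hG => hnone a.1 b.1 hne hG a.2 b.2 hab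
  have h := treewidth_add_one_le_mul_of_card_fiber_le Sigma.fst hcontract hm
    fun v => (card_sigma_fst_fiber v).trans_le (hW v)
  exact ⟨h, by omega⟩

/-- Replace every vertex `v` of a finite simple graph `G` by a finite simple graph `H v` on at
most `m ≥ 1` vertices (with pairwise disjoint vertex sets), keeping all edges of each `H v`,
and, for each edge `{u, v}` of `G`, adding exactly one edge between some vertex of `H u` and
some vertex of `H v` (and no other edges). Then `tw(G') + 1 ≤ m * (tw(G) + 1)`; in particular
`tw(G') ≤ m * (tw(G) + 1) - 1`. -/
theorem treewidth_blowup {V : Type} [Fintype V] (G : SimpleGraph V) (m : ℕ) (hm : 1 ≤ m)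
    {W : V → Type} [∀ v, Fintype (W v)] (hW : ∀ v, Fintype.card (W v) ≤ m)
    (H : ∀ v, SimpleGraph (W v)) (G' : SimpleGraph (Σ v : V, W v))
    (hintra : ∀ (v : V) (x y : W v),
      G'.Adj ⟨v, x⟩ ⟨v, y⟩ ↔ (H v).Adj x y)
    (hcross : ∀ u v : V, u ≠ v → G.Adj u v →
      ∃! p : W u × W v, G'.Adj ⟨u, p.1⟩ ⟨v, p.2⟩)
    (hnone : ∀ u v : V, u ≠ v → ¬ G.Adj u v →
      ∀ (x : W u) (y : W v), ¬ G'.Adj ⟨u, x⟩ ⟨v, y⟩) :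
    treewidth G' + 1 ≤ m * (treewidth G + 1) ∧
    treewidth G' ≤ m * (treewidth G + 1) - 1 :=
  treewidth_blowup_general G m hm hW G' hnone
end

section
/- Let G = (V, E) be a finite simple graph, let m ≥ 1, and for each vertex v ∈ V let H_v be a finite simple graph on at most m vertices, with the vertex sets of the H_v pairwise disjoint. Let G' be any graph whose vertex set is the disjoint union of the vertex sets of the H_v, whose edge set contains all edges of each H_v, and whose remaining edges are as follows: for each edge {u, v} ∈ E there is exactly one edge of G' joining some vertex of H_u to some vertex of H_v (and there are no other edges). Then pw(G') + 1 ≤ m · (pw(G) + 1); in particular pw(G') ≤ m · (pw(G) + 1) − 1. -/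
open Finset

lemma IsTreeDecomp.sigma_univ {V : Type} {W : V → Type} [∀ v, Fintype (W v)]
    {G : SimpleGraph V} {G' : SimpleGraph (Σ v, W v)} {n : ℕ} {T : SimpleGraph (Fin n)}
    {bag : Fin n → Finset V} (hd : IsTreeDecomp G T bag)
    (hG' : ∀ u v (x : W u) (y : W v), u ≠ v → G'.Adj ⟨u, x⟩ ⟨v, y⟩ → G.Adj u v) :
    IsTreeDecomp G' T fun i => (bag i).sigma fun _ => univ := by
  obtain ⟨hT, hcover, hedge, hconn⟩ := hd
  have hmem : ∀ i v (x : W v), (⟨v, x⟩ : Σ v, W v) ∈ (bag i).sigma (fun _ => univ) ↔ v ∈ bag i :=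
    by simp
  refine ⟨hT, fun ⟨v, x⟩ => ?_, fun ⟨u, x⟩ ⟨v, y⟩ hadj => ?_, fun ⟨v, x⟩ => ?_⟩
  · obtain ⟨i, hi⟩ := hcover v
    exact ⟨i, (hmem i v x).2 hi⟩
  · obtain ⟨i, hu, hv⟩ : ∃ i, u ∈ bag i ∧ v ∈ bag i := by
      by_cases huv : u = v
      · subst huv
        obtain ⟨i, hi⟩ := hcover u
        exact ⟨i, hi, hi⟩
      · exact hedge u v (hG' u v x y huv hadj)
    exact ⟨i, (hmem i u x).2 hu, (hmem i v y).2 hv⟩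
  · rw [show {i | (⟨v, x⟩ : Σ v, W v) ∈ (bag i).sigma fun _ => univ} = {i | v ∈ bag i} from
      Set.ext fun i => hmem i v x]
    exact hconn v

lemma card_sigma_univ_le {V : Type} {W : V → Type} [∀ v, Fintype (W v)] {m : ℕ}
    (hW : ∀ v, Fintype.card (W v) ≤ m) (s : Finset V) :
    #(s.sigma fun v => (univ : Finset (W v))) ≤ #s * m := by
  rw [card_sigma]
  exact sum_le_card_nsmul s _ m fun v _ => hW v

lemma isTreeDecomp_pathGraph_one_univ {V : Type} [Fintype V] (G : SimpleGraph V) :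
    IsTreeDecomp G (SimpleGraph.pathGraph 1) fun _ => univ := by
  refine ⟨.of_subsingleton, fun v => ⟨0, mem_univ v⟩, fun u v _ => ⟨0, mem_univ u, mem_univ v⟩,
    fun v => ?_⟩
  have : Nonempty {i : Fin 1 | v ∈ (univ : Finset V)} := ⟨⟨0, mem_univ v⟩⟩
  exact .of_subsingleton

lemma exists_pathDecomp_card_le_pathwidth_add_one {V : Type} [Fintype V] (G : SimpleGraph V) :
    ∃ (n : ℕ) (bag : Fin n → Finset V),
      IsTreeDecomp G (SimpleGraph.pathGraph n) bag ∧ ∀ i, #(bag i) ≤ pathwidth G + 1 :=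
  Nat.sInf_mem (s := {w | ∃ (n : ℕ) (bag : Fin n → Finset V),
      IsTreeDecomp G (SimpleGraph.pathGraph n) bag ∧ ∀ i, #(bag i) ≤ w + 1})
    ⟨Fintype.card V, 1, _, isTreeDecomp_pathGraph_one_univ G, fun _ =>
      (card_le_univ _).trans (Nat.le_succ _)⟩

lemma pathwidth_le_of_isTreeDecomp {V : Type} {G : SimpleGraph V} {n w : ℕ}
    {bag : Fin n → Finset V} (hd : IsTreeDecomp G (SimpleGraph.pathGraph n) bag)
    (hcard : ∀ i, #(bag i) ≤ w + 1) : pathwidth G ≤ w :=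
  Nat.sInf_le ⟨n, bag, hd, hcard⟩

theorem pathwidth_blowup_general {V : Type} [Fintype V] (G : SimpleGraph V) (m : ℕ) (hm : 1 ≤ m)
    {W : V → Type} [∀ v, Fintype (W v)] (hW : ∀ v, Fintype.card (W v) ≤ m)
    (G' : SimpleGraph (Σ v : V, W v))
    (hnone : ∀ u v : V, u ≠ v → ¬ G.Adj u v →
      ∀ (x : W u) (y : W v), ¬ G'.Adj ⟨u, x⟩ ⟨v, y⟩) :
    pathwidth G' + 1 ≤ m * (pathwidth G + 1) ∧
    pathwidth G' ≤ m * (pathwidth G + 1) - 1 := by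
  obtain ⟨n, bag, hd, hcard⟩ := exists_pathDecomp_card_le_pathwidth_add_one G
  have hd' := hd.sigma_univ (G' := G') fun u v x y huv hadj =>
    not_not.mp fun hG => hnone u v huv hG x y hadj
  have hpos : 0 < m * (pathwidth G + 1) := by positivity
  have hle : pathwidth G' ≤ m * (pathwidth G + 1) - 1 := by
    refine pathwidth_le_of_isTreeDecomp hd' fun i => ?_
    calc #((bag i).sigma fun v => univ)
        ≤ #(bag i) * m := card_sigma_univ_le hW (bag i)
      _ ≤ (pathwidth G + 1) * m := Nat.mul_le_mul_right m (hcard i)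
      _ = m * (pathwidth G + 1) - 1 + 1 := by rw [Nat.mul_comm]; omega
  exact ⟨by omega, hle⟩

/-- Replace every vertex `v` of a finite simple graph `G` by a finite simple graph `H v` on at
most `m ≥ 1` vertices (with pairwise disjoint vertex sets), keeping all edges of each `H v`,
and, for each edge `{u, v}` of `G`, adding exactly one edge between some vertex of `H u` and
some vertex of `H v` (and no other edges). Then `pw(G') + 1 ≤ m * (pw(G) + 1)`; in particular
`pw(G') ≤ m * (pw(G) + 1) - 1`. -/
theorem pathwidth_blowup {V : Type} [Fintype V] (G : SimpleGraph V) (m : ℕ) (hm : 1 ≤ m)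
    {W : V → Type} [∀ v, Fintype (W v)] (hW : ∀ v, Fintype.card (W v) ≤ m)
    (H : ∀ v, SimpleGraph (W v)) (G' : SimpleGraph (Σ v : V, W v))
    (hintra : ∀ (v : V) (x y : W v),
      G'.Adj ⟨v, x⟩ ⟨v, y⟩ ↔ (H v).Adj x y)
    (hcross : ∀ u v : V, u ≠ v → G.Adj u v →
      ∃! p : W u × W v, G'.Adj ⟨u, p.1⟩ ⟨v, p.2⟩)
    (hnone : ∀ u v : V, u ≠ v → ¬ G.Adj u v →
      ∀ (x : W u) (y : W v), ¬ G'.Adj ⟨u, x⟩ ⟨v, y⟩) :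
    pathwidth G' + 1 ≤ m * (pathwidth G + 1) ∧
    pathwidth G' ≤ m * (pathwidth G + 1) - 1 :=
  pathwidth_blowup_general G m hm hW G' hnone
end
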